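/- Uniform lower bound on normals paired against the staircase direction: Let ī := (Id, 2·Id, …, K·Id) ∈ (S^D)^K, where Id is the D×D identity matrix. For every ν ∈ (S^D)^K with −ν ∈ Ū_K^*, one has −ī·ν ≥ Σ_{k=1}^K |Σ_{ℓ=k}^K ν_ℓ|. Consequently, there exists a constant c > 0, depending only on D and K, such that for every ν ∈ (S^D)^K with |ν| = 1 and −ν ∈ Ū_K^*, one has −ī·ν ≥ c. -/

import Mathlib

noncomputable section

namespace SpinGlassStmt

/-- Index set for the coordinates of a symmetric `D × D` matrix. -/
def SIdx (D : ℕ) := {p : Fin D × Fin D // p.1 ≤ p.2}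

instance (D : ℕ) : Fintype (SIdx D) := by unfold SIdx; infer_instance
instance (D : ℕ) : DecidableEq (SIdx D) := by unfold SIdx; infer_instance

/-- Coordinates of an element of `S^D`. -/
abbrev Sym (D : ℕ) := SIdx D → ℝ

/-- The symmetric matrix associated with an element of `Sym D`. -/
def toMat {D : ℕ} (a : Sym D) : Matrix (Fin D) (Fin D) ℝ :=
  Matrix.of fun i j => if h : i ≤ j then a ⟨(i, j), h⟩ else a ⟨(j, i), le_of_not_ge h⟩

/-- Positive semidefiniteness, as a predicate on `Sym D`. -/
def PSD {D : ℕ} (a : Sym D) : Prop := (toMat a).PosSemidef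

/-- Trace (Frobenius) inner product `a · b = tr (a b)` on `S^D`. -/
def sdot {D : ℕ} (a b : Sym D) : ℝ :=
  ∑ i : Fin D, ∑ j : Fin D, toMat a i j * toMat b i j

/-- The norm `|a| = (a · a)^(1/2)` on `S^D`. -/
def snorm {D : ℕ} (a : Sym D) : ℝ := Real.sqrt (sdot a a)

/-- The space `(S^D)^K`. -/
abbrev EK (D K : ℕ) := Fin K → Sym D

/-- Inner product on `(S^D)^K`:  `x · y = ∑ k, x k · y k`. -/
def kdot {D K : ℕ} (x y : EK D K) : ℝ := ∑ k : Fin K, sdot (x k) (y k)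

/-- The norm `|x| = (x · x)^(1/2)` on `(S^D)^K`. -/
def knorm {D K : ℕ} (x : EK D K) : ℝ := Real.sqrt (kdot x x)

/-- The closed convex cone `Ū_K` of nondecreasing tuples of positive semidefinite
matrices. -/
def Ubar (D K : ℕ) : Set (EK D K) :=
  {x | (∀ k, PSD (x k)) ∧ ∀ i j : Fin K, i ≤ j → PSD (x j - x i)}

/-- The dual cone `Ū_K^*`. -/
def Udual (D K : ℕ) : Set (EK D K) := {x | ∀ v ∈ Ubar D K, 0 ≤ kdot x v}

/-- The set `n(x)` of outer normal vectors to `Ū_K` at a boundary point `x`. -/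
def normalCone {D K : ℕ} (x : EK D K) : Set (EK D K) :=
  {ν | knorm ν = 1 ∧ ∀ y ∈ Ubar D K, kdot (y - x) ν ≤ 0}

/-- Weight of a coordinate of a symmetric matrix (diagonal entries count once,
off-diagonal entries twice) in the trace inner product. -/
def wt {D : ℕ} (q : SIdx D) : ℝ := if q.val.1 = q.val.2 then 1 else 2

/-- The spatial gradient `∇φ ∈ (S^D)^K` of a function `φ = φ(t, x)`, i.e. the
representative of the spatial differential with respect to the trace inner
product. -/
def grad {D K : ℕ} (φ : ℝ × EK D K → ℝ) (p : ℝ × EK D K) : EK D K :=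
  fun k q => fderiv ℝ φ p (0, Pi.single k (Pi.single q 1)) / wt q

/-- The time derivative `∂_t φ` of a function `φ = φ(t, x)`. -/
def tderiv {D K : ℕ} (φ : ℝ × EK D K → ℝ) (p : ℝ × EK D K) : ℝ := fderiv ℝ φ p (1, 0)

/-- Viscosity subsolution of `∂_t f - H(∇f) = 0` in `S × U_K` with Neumann
boundary condition `n · ∇f = 0` on `S × ∂U_K`, where `S` is the set of times. -/
def HJSub (D K : ℕ) (S : Set ℝ) (H : EK D K → ℝ) (u : ℝ × EK D K → ℝ) : Prop :=
  ∀ φ : ℝ × EK D K → ℝ, ContDiff ℝ (⊤ : ℕ∞) φ → ∀ t : ℝ, ∀ x : EK D K,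
    t ∈ S → x ∈ Ubar D K →
    IsLocalMaxOn (fun p => u p - φ p) (S ×ˢ Ubar D K) (t, x) →
    (x ∈ interior (Ubar D K) → tderiv φ (t, x) - H (grad φ (t, x)) ≤ 0) ∧
    (x ∉ interior (Ubar D K) →
      min (sInf ((fun ν => kdot ν (grad φ (t, x))) '' normalCone x))
        (tderiv φ (t, x) - H (grad φ (t, x))) ≤ 0)

/-- Viscosity supersolution of `∂_t f - H(∇f) = 0` in `S × U_K` with Neumann
boundary condition `n · ∇f = 0` on `S × ∂U_K`. -/
def HJSuper (D K : ℕ) (S : Set ℝ) (H : EK D K → ℝ) (u : ℝ × EK D K → ℝ) : Prop :=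
  ∀ φ : ℝ × EK D K → ℝ, ContDiff ℝ (⊤ : ℕ∞) φ → ∀ t : ℝ, ∀ x : EK D K,
    t ∈ S → x ∈ Ubar D K →
    IsLocalMinOn (fun p => u p - φ p) (S ×ˢ Ubar D K) (t, x) →
    (x ∈ interior (Ubar D K) → 0 ≤ tderiv φ (t, x) - H (grad φ (t, x))) ∧
    (x ∉ interior (Ubar D K) →
      0 ≤ max (sSup ((fun ν => kdot ν (grad φ (t, x))) '' normalCone x))
        (tderiv φ (t, x) - H (grad φ (t, x))))

/-- Local Lipschitz continuity of the nonlinearity `H`, with respect to the norm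
derived from the trace inner product. -/
def LocLip {D K : ℕ} (H : EK D K → ℝ) : Prop :=
  ∀ x : EK D K, ∃ ε > (0:ℝ), ∃ L : ℝ, ∀ y z : EK D K,
    knorm (y - x) ≤ ε → knorm (z - x) ≤ ε → |H y - H z| ≤ L * knorm (y - z)


/-- The "staircase" direction `ī = (Id, 2·Id, …, K·Id) ∈ (S^D)^K`, in
coordinates (the `k`-th entry, `0`-based, is `(k+1) · Id`). -/
def iBar (D K : ℕ) : EK D K :=
  fun k q => if q.val.1 = q.val.2 then ((k : ℕ) + 1 : ℝ) else 0

end SpinGlassStmt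

/-!
Testing `-ν ∈ Ū_K^*` against `(0, …, 0, b, …, b)` (with `b ⪰ 0` from position `k` on) shows
that every tail sum `S_k = ∑_{ℓ ≥ k} ν_ℓ` is negative semidefinite, and the Frobenius norm of a
negative semidefinite matrix is at most minus its trace (entrywise, `a_ij² ≤ a_ii a_jj`).
Summation by parts gives `ī · ν = ∑_k tr S_k`, whence the first bound. Since
`ν_k = S_k - S_{k+1}`, we get `|ν| ≤ ∑_k |ν_k| ≤ 2 ∑_k |S_k|`, so `c = 1/2` works.
-/

open Finset

namespace Fin

theorem sum_sum_Ici {M : Type*} [AddCommMonoid M] {K : ℕ} (f : Fin K → M) :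
    ∑ k, ∑ ℓ ∈ Ici k, f ℓ = ∑ ℓ : Fin K, ((ℓ : ℕ) + 1) • f ℓ := by
  rw [sum_comm' (t' := univ) (s' := Iic) (by simp)]
  simp [card_Iic]

theorem sum_norm_le_two_mul_sum_norm_sum_Ici {E : Type*} [SeminormedAddCommGroup E] {K : ℕ}
    (f : Fin K → E) : ∑ k, ‖f k‖ ≤ 2 * ∑ k, ‖∑ ℓ ∈ Ici k, f ℓ‖ := by
  have hf : ∀ k, f k = ∑ ℓ ∈ Ici k, f ℓ - ∑ ℓ ∈ Ioi k, f ℓ := fun k => by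
    rw [← Ioi_insert, sum_insert (by simp), add_sub_cancel_right]
  have hshift : ∑ k, ‖∑ ℓ ∈ Ioi k, f ℓ‖ ≤ ∑ k, ‖∑ ℓ ∈ Ici k, f ℓ‖ := by
    cases K with
    | zero => simp
    | succ n =>
      have hIoi : ∀ i : Fin n, Ioi i.castSucc = Ici i.succ := fun i => by
        ext ℓ; simp [lt_def, le_def]
      have hlast : Ioi (last n) = ∅ := Ioi_top
      rw [sum_univ_castSucc, sum_univ_succ]
      simp only [hIoi, hlast, sum_empty, norm_zero, add_zero]
      linarith [norm_nonneg (∑ ℓ ∈ Ici (0 : Fin (n + 1)), f ℓ)]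
  calc ∑ k, ‖f k‖ ≤ ∑ k, (‖∑ ℓ ∈ Ici k, f ℓ‖ + ‖∑ ℓ ∈ Ioi k, f ℓ‖) :=
        sum_le_sum fun k _ => (hf k).symm ▸ norm_sub_le _ _
    _ ≤ 2 * ∑ k, ‖∑ ℓ ∈ Ici k, f ℓ‖ := by rw [sum_add_distrib]; linarith

end Fin

theorem Real.sqrt_sum_sq_le_sum {ι : Type*} (s : Finset ι) {x : ι → ℝ} (hx : ∀ i ∈ s, 0 ≤ x i) :
    √(∑ i ∈ s, x i ^ 2) ≤ ∑ i ∈ s, x i :=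
  (Real.sqrt_le_left (sum_nonneg hx)).mpr (sum_sq_le_sq_sum_of_nonneg hx)

namespace Matrix

variable {n : Type*}

theorem PosSemidef.sq_apply_le_apply_mul_apply {A : Matrix n n ℝ} (hA : A.PosSemidef) (i j : n) :
    A i j ^ 2 ≤ A i i * A j j := by
  have h := (hA.submatrix ![i, j]).det_nonneg
  rw [det_fin_two] at h
  simp only [submatrix_apply, cons_val_zero, cons_val_one] at h
  have hsymm : A j i = A i j := hA.isHermitian.apply i j
  rw [hsymm] at h
  nlinarith

variable [Fintype n]

attribute [local instance] frobeniusNormedAddCommGroup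

theorem frobenius_norm_eq_sqrt {m α : Type*} [Fintype m] [NormedAddCommGroup α]
    (A : Matrix m n α) : ‖A‖ = √(∑ i, ∑ j, ‖A i j‖ ^ 2) := by
  simp [frobenius_norm_def, Real.sqrt_eq_rpow]

theorem PosSemidef.frobenius_norm_le_trace {A : Matrix n n ℝ} (hA : A.PosSemidef) :
    ‖A‖ ≤ A.trace := by
  have hsum : ∑ i, ∑ j, A i j ^ 2 ≤ A.trace ^ 2 := by
    rw [sq A.trace, trace, sum_mul_sum]
    exact sum_le_sum fun i _ => sum_le_sum fun j _ => hA.sq_apply_le_apply_mul_apply i j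
  rw [frobenius_norm_eq_sqrt]
  simp only [Real.norm_eq_abs, sq_abs]
  exact (Real.sqrt_le_left hA.trace_nonneg).mpr hsum

end Matrix

namespace SpinGlassStmt

open Matrix

attribute [local instance] Matrix.frobeniusNormedAddCommGroup

def toMatₗ (D : ℕ) : Sym D →ₗ[ℝ] Matrix (Fin D) (Fin D) ℝ where
  toFun := toMat
  map_add' a b := by ext i j; simp only [toMat, of_apply, Matrix.add_apply]; split_ifs <;> rfl
  map_smul' c a := by ext i j; simp only [toMat, of_apply, Matrix.smul_apply]; split_ifs <;> rfl

variable {D K : ℕ}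

theorem toMat_sum {ι : Type*} (s : Finset ι) (f : ι → Sym D) :
    toMat (∑ ℓ ∈ s, f ℓ) = ∑ ℓ ∈ s, toMat (f ℓ) :=
  map_sum (toMatₗ D) f s

theorem toMat_neg (a : Sym D) : toMat (-a) = -toMat a := map_neg (toMatₗ D) a

theorem toMat_zero : toMat (0 : Sym D) = 0 := map_zero (toMatₗ D)

theorem isSymm_toMat (a : Sym D) : (toMat a).IsSymm := by
  refine IsSymm.ext fun i j => ?_
  simp only [toMat, of_apply]
  split_ifs with hji hij hij
  · obtain rfl := le_antisymm hij hji; rfl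
  · rfl
  · rfl
  · exact ((le_total i j).elim hij hji).elim

def ofMat (M : Matrix (Fin D) (Fin D) ℝ) : Sym D := fun q => M q.val.1 q.val.2

theorem toMat_ofMat {M : Matrix (Fin D) (Fin D) ℝ} (hM : M.IsSymm) : toMat (ofMat M) = M := by
  ext i j
  simp only [toMat, ofMat, of_apply]
  split_ifs
  · rfl
  · exact hM.apply i j

theorem sdot_sum_left {ι : Type*} (s : Finset ι) (f : ι → Sym D) (b : Sym D) :
    sdot (∑ ℓ ∈ s, f ℓ) b = ∑ ℓ ∈ s, sdot (f ℓ) b := by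
  simp only [sdot, toMat_sum, Matrix.sum_apply, sum_mul]
  rw [sum_comm (s := s)]
  exact sum_congr rfl fun i _ => sum_comm

theorem sdot_neg_left (a b : Sym D) : sdot (-a) b = -sdot a b := by
  simp [sdot, toMat_neg]

theorem sdot_zero_right (a : Sym D) : sdot a 0 = 0 := by
  simp [sdot, toMat_zero]

theorem sq_snorm (a : Sym D) : snorm a ^ 2 = sdot a a :=
  Real.sq_sqrt (sum_nonneg fun _ _ => sum_nonneg fun _ _ => mul_self_nonneg _)

theorem snorm_eq_norm_toMat (a : Sym D) : snorm a = ‖toMat a‖ := by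
  simp [snorm, sdot, frobenius_norm_eq_sqrt, sq]

theorem toMat_ofMat_vecMulVec (x : Fin D → ℝ) :
    toMat (ofMat (vecMulVec x x)) = vecMulVec x x :=
  toMat_ofMat (IsSymm.ext fun i j => mul_comm (x j) (x i))

theorem sdot_ofMat_vecMulVec (a : Sym D) (x : Fin D → ℝ) :
    sdot a (ofMat (vecMulVec x x)) = x ⬝ᵥ toMat a *ᵥ x := by
  rw [sdot, toMat_ofMat_vecMulVec]
  simp only [dotProduct, mulVec, vecMulVec_apply, mul_sum]
  exact sum_congr rfl fun i _ => sum_congr rfl fun j _ => by ring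

theorem negSemidef_toMat_of_sdot_nonpos {a : Sym D} (h : ∀ b, PSD b → sdot a b ≤ 0) :
    (-toMat a).PosSemidef := by
  refine PosSemidef.of_dotProduct_mulVec_nonneg (isSymm_toMat a).neg fun x => ?_
  have hx := h _ <| show PSD (ofMat (vecMulVec x x)) by
    rw [PSD, toMat_ofMat_vecMulVec]
    simpa using posSemidef_vecMulVec_self_star x
  rw [sdot_ofMat_vecMulVec] at hx
  simpa [neg_mulVec] using hx

theorem ite_le_mem_Ubar {b : Sym D} (hb : PSD b) (k : Fin K) :
    (fun ℓ => if k ≤ ℓ then b else 0) ∈ Ubar D K := by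
  have h0 : PSD (0 : Sym D) := by rw [PSD, toMat_zero]; exact PosSemidef.zero
  refine ⟨fun ℓ => ?_, fun i j hij => ?_⟩
  · by_cases hℓ : k ≤ ℓ <;> simpa [hℓ]
  · by_cases hi : k ≤ i
    · simpa [hi, hi.trans hij] using h0
    · by_cases hj : k ≤ j <;> simpa [hi, hj]

theorem kdot_ite_le (x : EK D K) (k : Fin K) (b : Sym D) :
    kdot x (fun ℓ => if k ≤ ℓ then b else 0) = sdot (∑ ℓ ∈ Ici k, x ℓ) b := by
  simp only [kdot, sdot_sum_left, apply_ite (sdot _), sdot_zero_right, ← sum_filter]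
  congr 1
  ext ℓ
  simp

theorem negSemidef_toMat_sum_Ici {ν : EK D K} (hν : -ν ∈ Udual D K) (k : Fin K) :
    (-toMat (∑ ℓ ∈ Ici k, ν ℓ)).PosSemidef := by
  refine negSemidef_toMat_of_sdot_nonpos fun b hb => ?_
  have h := hν _ (ite_le_mem_Ubar hb k)
  rw [kdot_ite_le] at h
  simpa [sum_neg_distrib, sdot_neg_left] using h

theorem sdot_iBar (k : Fin K) (b : Sym D) :
    sdot (iBar D K k) b = ((k : ℕ) + 1) * (toMat b).trace := by
  have h : toMat (iBar D K k) = diagonal fun _ => ((k : ℕ) + 1 : ℝ) := by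
    ext i j
    simp only [toMat, iBar, of_apply, diagonal_apply]
    split_ifs <;> grind
  simp [sdot, h, diagonal_apply, trace, mul_sum]

theorem kdot_iBar (x : EK D K) :
    kdot (iBar D K) x = ∑ k, (toMat (∑ ℓ ∈ Ici k, x ℓ)).trace := by
  simp only [kdot, sdot_iBar, toMat_sum, trace_sum, Fin.sum_sum_Ici, nsmul_eq_mul]
  push_cast
  rfl

theorem knorm_le_sum_snorm (x : EK D K) : knorm x ≤ ∑ k, snorm (x k) := by
  rw [knorm, kdot]
  simp_rw [← sq_snorm]
  exact Real.sqrt_sum_sq_le_sum univ fun k _ => Real.sqrt_nonneg _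

theorem sum_snorm_sum_Ici_le_neg_kdot_iBar {ν : EK D K} (hν : -ν ∈ Udual D K) :
    ∑ k, snorm (∑ ℓ ∈ Ici k, ν ℓ) ≤ -kdot (iBar D K) ν := by
  rw [kdot_iBar, ← sum_neg_distrib]
  gcongr with k
  rw [snorm_eq_norm_toMat, ← norm_neg, ← trace_neg]
  exact (negSemidef_toMat_sum_Ici hν k).frobenius_norm_le_trace

theorem staircase_pairing_lower_bound_general (D K : ℕ) :
    (∀ ν : EK D K, -ν ∈ Udual D K →
      ∑ k : Fin K, snorm (∑ ℓ ∈ Finset.Ici k, ν ℓ) ≤ -(kdot (iBar D K) ν)) ∧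
    (∃ c : ℝ, 0 < c ∧ ∀ ν : EK D K, knorm ν = 1 → -ν ∈ Udual D K →
      c ≤ -(kdot (iBar D K) ν)) := by
  refine ⟨fun ν hν => sum_snorm_sum_Ici_le_neg_kdot_iBar hν, 1 / 2, by norm_num,
    fun ν hunit hν => ?_⟩
  have htails := Fin.sum_norm_le_two_mul_sum_norm_sum_Ici fun k => toMat (ν k)
  simp only [← snorm_eq_norm_toMat, ← toMat_sum] at htails
  linarith [knorm_le_sum_snorm ν, sum_snorm_sum_Ici_le_neg_kdot_iBar hν]

/-- Uniform lower bound on normals paired against the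
staircase direction: if `-ν ∈ Ū_K^*`, then `-ī · ν ≥ ∑_k |∑_{ℓ ≥ k} ν_ℓ|`,
and consequently there is a constant `c > 0`, depending only on `D` and `K`,
with `-ī · ν ≥ c` for all unit vectors `ν` with `-ν ∈ Ū_K^*`. -/
theorem staircase_pairing_lower_bound (D K : ℕ) (hD : 1 ≤ D) (hK : 1 ≤ K) :
    (∀ ν : EK D K, -ν ∈ Udual D K →
      ∑ k : Fin K, snorm (∑ ℓ ∈ Finset.Ici k, ν ℓ) ≤ -(kdot (iBar D K) ν)) ∧
    (∃ c : ℝ, 0 < c ∧ ∀ ν : EK D K, knorm ν = 1 → -ν ∈ Udual D K →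
      c ≤ -(kdot (iBar D K) ν)) :=
  staircase_pairing_lower_bound_general D K

end SpinGlassStmt
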